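/- arXiv:1102.2697 — 5 statements merged into one kernel-verified Lean document; each statement's English description precedes it below -/
import Mathlib

section
/- Let R be an ℕ-graded ring, a ∈ R a non-nilpotent element, and let I be a homogeneous (graded) two-sided ideal of R maximal among homogeneous ideals disjoint from {a^n : n ≥ 1}. Then I is a prime ideal of R, i.e. R/I is a prime ring. -/
/-!
Maximality makes `I` prime on homogeneous elements. If homogeneous `b, c ∉ I` satisfy
`b R c ⊆ I`, the homogeneous core of `I + (b)` (the elements all of whose components lie in it)
is a homogeneous ideal strictly above `I`, so it contains some `a ^ k`; likewise
`a ^ l ∈ I + (c)`, and then `a ^ (k + l) ∈ I + (b)(c) ⊆ I`, a contradiction.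

For arbitrary `p, q ∉ I` with `p R q ⊆ I`, let `p_m` and `q_n` be their components of largest
degree outside `I`. For `r` homogeneous of degree `k`, the component of degree `m + k + n` of
`p r q` is `p_m r q_n` modulo `I`, so `p_m R q_n ⊆ I`, contradicting the homogeneous case.
-/

open DirectSum Finset

section Decomposition

variable {ι R σ : Type*} [DecidableEq ι] [AddMonoid ι] [HasAntidiagonal ι] [Semiring R]
  [SetLike σ R] [AddSubmonoidClass σ R] (𝒜 : ι → σ) [GradedRing 𝒜]

theorem DirectSum.coe_decompose_mul_eq_sum_antidiagonal (x y : R) (n : ι) :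
    (decompose 𝒜 (x * y) n : R) =
      ∑ ij ∈ antidiagonal n, (decompose 𝒜 x ij.1 : R) * decompose 𝒜 y ij.2 := by
  rw [decompose_mul, coe_mul_apply_eq_sum_antidiagonal]

end Decomposition

section Membership

variable {ι M σ : Type*} [DecidableEq ι] [AddCommMonoid M] [SetLike σ M] [AddSubmonoidClass σ M]
  {ℳ : ι → σ} [Decomposition ℳ] {P : Type*} [SetLike P M] [AddSubmonoidClass P M] {p : P}

theorem DirectSum.mem_of_forall_coe_decompose_mem {x : M}
    (h : ∀ i, (decompose ℳ x i : M) ∈ p) : x ∈ p := by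
  classical
  rw [← sum_support_decompose ℳ x]
  exact sum_mem fun i _ ↦ h i

theorem DirectSum.coe_decompose_mem_of_mem {x : M} {i : ι} (hx : x ∈ ℳ i) (hxp : x ∈ p)
    (j : ι) : (decompose ℳ x j : M) ∈ p := by
  obtain rfl | hij := eq_or_ne i j
  · rwa [decompose_of_mem_same ℳ hx]
  · rw [decompose_of_mem_ne ℳ hx hij]
    exact zero_mem p

end Membership

namespace TwoSidedIdeal

section HomogeneousCore

variable {ι R σ : Type*} [DecidableEq ι] [AddMonoid ι] [HasAntidiagonal ι] [Ring R]
  [SetLike σ R] [AddSubgroupClass σ R] (𝒜 : ι → σ) [GradedRing 𝒜]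

def homogeneousCore (K : TwoSidedIdeal R) : TwoSidedIdeal R :=
  .mk' {x | ∀ i, (decompose 𝒜 x i : R) ∈ K}
    (fun i ↦ by simp)
    (fun hx hy i ↦ by simpa using K.add_mem (hx i) (hy i))
    (fun hx i ↦ by
      rw [decompose_neg, DFinsupp.neg_apply, NegMemClass.coe_neg]
      exact K.neg_mem (hx i))
    (fun hy i ↦ by
      rw [coe_decompose_mul_eq_sum_antidiagonal]
      exact K.finsetSum_mem _ _ fun ij _ ↦ K.mul_mem_left _ _ (hy ij.2))
    (fun hx i ↦ by
      rw [coe_decompose_mul_eq_sum_antidiagonal]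
      exact K.finsetSum_mem _ _ fun ij _ ↦ K.mul_mem_right _ _ (hx ij.1))

variable {𝒜} {K I : TwoSidedIdeal R}

theorem mem_homogeneousCore {x : R} :
    x ∈ homogeneousCore 𝒜 K ↔ ∀ i, (decompose 𝒜 x i : R) ∈ K :=
  mem_mk' ..

theorem homogeneousCore_le : homogeneousCore 𝒜 K ≤ K :=
  fun _ hx ↦ mem_of_forall_coe_decompose_mem (mem_homogeneousCore.1 hx)

theorem isHomogeneous_homogeneousCore : SetLike.IsHomogeneous 𝒜 (homogeneousCore 𝒜 K) :=
  fun i _ hx ↦ mem_homogeneousCore.2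
    (coe_decompose_mem_of_mem (decompose 𝒜 _ i).2 (mem_homogeneousCore.1 hx i))

theorem le_homogeneousCore (hI : SetLike.IsHomogeneous 𝒜 I) (hIK : I ≤ K) :
    I ≤ homogeneousCore 𝒜 K :=
  fun _ hx ↦ mem_homogeneousCore.2 fun i ↦ hIK (hI i hx)

end HomogeneousCore

section SpanSingleton

variable {R : Type*} [Ring R] {I : TwoSidedIdeal R} {b c : R}

theorem forall_mul_mul_mem_of_mem_span_singleton_left (h : ∀ r, b * r * c ∈ I) {u : R}
    (hu : u ∈ span {b}) : ∀ r, u * r * c ∈ I := by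
  induction hu using span_induction with
  | mem x hx => rwa [Set.mem_singleton_iff.1 hx]
  | zero => simp
  | add x y _ _ hx hy => exact fun r ↦ by simpa only [add_mul] using I.add_mem (hx r) (hy r)
  | neg x _ hx => exact fun r ↦ by simpa only [neg_mul] using I.neg_mem (hx r)
  | left_absorb a x _ hx =>
    exact fun r ↦ by simpa only [mul_assoc] using I.mul_mem_left a _ (hx r)
  | right_absorb a x _ hx => exact fun r ↦ by simpa only [mul_assoc] using hx (a * r)

theorem forall_mul_mul_mem_of_mem_span_singleton_right (h : ∀ r, b * r * c ∈ I) {v : R}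
    (hv : v ∈ span {c}) : ∀ r, b * r * v ∈ I := by
  induction hv using span_induction with
  | mem x hx => rwa [Set.mem_singleton_iff.1 hx]
  | zero => simp
  | add x y _ _ hx hy => exact fun r ↦ by simpa only [mul_add] using I.add_mem (hx r) (hy r)
  | neg x _ hx => exact fun r ↦ by simpa only [mul_neg] using I.neg_mem (hx r)
  | left_absorb a x _ hx => exact fun r ↦ by simpa only [mul_assoc] using hx (r * a)
  | right_absorb a x _ hx =>
    exact fun r ↦ by simpa only [← mul_assoc] using I.mul_mem_right _ a (hx r)

theorem mul_mem_of_mem_span_singleton (h : ∀ r, b * r * c ∈ I) {u v : R}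
    (hu : u ∈ span {b}) (hv : v ∈ span {c}) : u * v ∈ I := by
  simpa using forall_mul_mul_mem_of_mem_span_singleton_right
    (forall_mul_mul_mem_of_mem_span_singleton_left h hu) hv 1

end SpanSingleton

section MaximalAvoidingPowers

variable {ι R σ : Type*} [DecidableEq ι] [AddMonoid ι] [HasAntidiagonal ι] [Ring R]
  [SetLike σ R] [AddSubgroupClass σ R] {𝒜 : ι → σ} [GradedRing 𝒜] {a : R} {I : TwoSidedIdeal R}

theorem exists_pow_mem_sup_span_singleton (hI : SetLike.IsHomogeneous 𝒜 I)
    (hmax : ∀ J : TwoSidedIdeal R, SetLike.IsHomogeneous 𝒜 J →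
      (∀ n : ℕ, 1 ≤ n → a ^ n ∉ J) → I ≤ J → J = I)
    {b : R} {i : ι} (hb : b ∈ 𝒜 i) (hbI : b ∉ I) :
    ∃ n : ℕ, 1 ≤ n ∧ a ^ n ∈ I ⊔ span {b} := by
  by_contra! h
  have hcore := hmax (homogeneousCore 𝒜 (I ⊔ span {b})) isHomogeneous_homogeneousCore
    (fun n hn hmem ↦ h n hn (homogeneousCore_le hmem)) (le_homogeneousCore hI le_sup_left)
  refine hbI (hcore ▸ mem_homogeneousCore.2 (coe_decompose_mem_of_mem hb ?_))
  exact mem_sup_right (subset_span rfl)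

theorem mem_or_mem_of_homogeneous_of_maximal (hI : SetLike.IsHomogeneous 𝒜 I)
    (hdisj : ∀ n : ℕ, 1 ≤ n → a ^ n ∉ I)
    (hmax : ∀ J : TwoSidedIdeal R, SetLike.IsHomogeneous 𝒜 J →
      (∀ n : ℕ, 1 ≤ n → a ^ n ∉ J) → I ≤ J → J = I)
    {b c : R} {i j : ι} (hb : b ∈ 𝒜 i) (hc : c ∈ 𝒜 j) (hbc : ∀ r, b * r * c ∈ I) :
    b ∈ I ∨ c ∈ I := by
  by_contra! hbcI
  obtain ⟨k, hk, hak⟩ := exists_pow_mem_sup_span_singleton hI hmax hb hbcI.1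
  obtain ⟨l, hl, hal⟩ := exists_pow_mem_sup_span_singleton hI hmax hc hbcI.2
  obtain ⟨x, hx, u, hu, hxu⟩ := mem_sup.1 hak
  obtain ⟨y, hy, v, hv, hyv⟩ := mem_sup.1 hal
  refine hdisj (k + l) (by omega) ?_
  rw [pow_add, ← hxu, ← hyv, add_mul, mul_add u]
  exact I.add_mem (I.mul_mem_right _ _ hx)
    (I.add_mem (I.mul_mem_left _ _ hy) (mul_mem_of_mem_span_singleton hbc hu hv))

end MaximalAvoidingPowers

end TwoSidedIdeal

section LeadingComponents

variable {R σ : Type*} [Ring R] [SetLike σ R] [AddSubgroupClass σ R] {𝒜 : ℕ → σ} [GradedRing 𝒜]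
  {I : TwoSidedIdeal R}

theorem DirectSum.exists_greatest_coe_decompose_notMem {x : R} (hx : x ∉ I) :
    ∃ m, (decompose 𝒜 x m : R) ∉ I ∧ ∀ i, m < i → (decompose 𝒜 x i : R) ∈ I := by
  classical
  set S := {i | (decompose 𝒜 x i : R) ∉ I}
  obtain ⟨m, hm⟩ : S.Nonempty := not_forall.1 (mt mem_of_forall_coe_decompose_mem hx)
  have hbdd : BddAbove S := (decompose 𝒜 x).support.bddAbove.mono fun i hi ↦
    DFinsupp.mem_support_iff.2 fun h0 ↦ hi (by rw [h0]; exact I.zero_mem)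
  exact ⟨sSup S, Nat.sSup_mem ⟨m, hm⟩ hbdd,
    fun i hi ↦ not_not.1 fun h ↦ (le_csSup hbdd h).not_gt hi⟩

theorem DirectSum.coe_decompose_mul_add_sub_mul_mem {x y : R} {m n : ℕ}
    (hx : ∀ i, m < i → (decompose 𝒜 x i : R) ∈ I) (hy : ∀ j, n < j → (decompose 𝒜 y j : R) ∈ I) :
    (decompose 𝒜 (x * y) (m + n) : R) - decompose 𝒜 x m * decompose 𝒜 y n ∈ I := by
  have hmn : (m, n) ∈ antidiagonal (m + n) := HasAntidiagonal.mem_antidiagonal.2 rfl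
  rw [coe_decompose_mul_eq_sum_antidiagonal, ← add_sum_erase _ _ hmn, add_sub_cancel_left]
  refine I.finsetSum_mem _ _ fun ij hij ↦ ?_
  obtain ⟨hne, hsum⟩ := mem_erase.1 hij
  rw [HasAntidiagonal.mem_antidiagonal] at hsum
  rcases lt_or_ge m ij.1 with h | h
  · exact I.mul_mem_right _ _ (hx _ h)
  · refine I.mul_mem_left _ _ (hy _ ?_)
    by_contra! h'
    exact hne (Prod.ext (by omega) (by omega))

theorem DirectSum.coe_decompose_mul_mem_of_lt {x r : R} {m k i : ℕ}
    (hx : ∀ i, m < i → (decompose 𝒜 x i : R) ∈ I) (hr : r ∈ 𝒜 k) (hi : m + k < i) :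
    (decompose 𝒜 (x * r) i : R) ∈ I := by
  rw [coe_decompose_mul_of_right_mem_of_le 𝒜 hr (by omega)]
  exact I.mul_mem_right _ _ (hx _ (by omega))

theorem TwoSidedIdeal.mem_or_mem_of_homogeneous_mem_or_mem (hI : SetLike.IsHomogeneous 𝒜 I)
    (hgr : ∀ {b c : R} {i j : ℕ}, b ∈ 𝒜 i → c ∈ 𝒜 j → (∀ r, b * r * c ∈ I) → b ∈ I ∨ c ∈ I)
    {p q : R} (hpq : ∀ r, p * r * q ∈ I) : p ∈ I ∨ q ∈ I := by
  by_contra! h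
  obtain ⟨m, hpm, hp⟩ := exists_greatest_coe_decompose_notMem (𝒜 := 𝒜) h.1
  obtain ⟨n, hqn, hq⟩ := exists_greatest_coe_decompose_notMem (𝒜 := 𝒜) h.2
  suffices hlead : ∀ r, (decompose 𝒜 p m : R) * r * decompose 𝒜 q n ∈ I from
    (hgr (decompose 𝒜 p m).2 (decompose 𝒜 q n).2 hlead).elim hpm hqn
  intro r
  induction r using Decomposition.inductionOn 𝒜 with
  | zero => simp
  | @homogeneous k r =>
    have hdiff := coe_decompose_mul_add_sub_mul_mem
      (fun i hi ↦ coe_decompose_mul_mem_of_lt hp r.2 hi) hq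
    rw [coe_decompose_mul_add_of_right_mem 𝒜 r.2] at hdiff
    simpa only [sub_sub_cancel] using I.sub_mem (hI (m + k + n) (hpq r)) hdiff
  | add r s hr hs => simpa only [mul_add, add_mul] using I.add_mem hr hs

end LeadingComponents

theorem homogeneous_maximal_disjoint_powers_prime_general {R : Type*} [Ring R]
    (𝒜 : ℕ → AddSubgroup R) [GradedRing 𝒜]
    (a : R)
    (I : TwoSidedIdeal R)
    (hhom : ∀ f ∈ I, ∀ n : ℕ, (DirectSum.decompose 𝒜 f n : R) ∈ I)
    (hdisj : ∀ n : ℕ, 1 ≤ n → a ^ n ∉ I)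
    (hmax : ∀ J : TwoSidedIdeal R, (∀ f ∈ J, ∀ n : ℕ, (DirectSum.decompose 𝒜 f n : R) ∈ J) →
      (∀ n : ℕ, 1 ≤ n → a ^ n ∉ J) → I ≤ J → J = I) :
    ∀ p q : R, (∀ r : R, p * r * q ∈ I) → p ∈ I ∨ q ∈ I := by
  have hI : SetLike.IsHomogeneous 𝒜 I := fun n f hf ↦ hhom f hf n
  have hmax' : ∀ J : TwoSidedIdeal R, SetLike.IsHomogeneous 𝒜 J →
      (∀ n : ℕ, 1 ≤ n → a ^ n ∉ J) → I ≤ J → J = I :=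
    fun J hJ ↦ hmax J fun f hf n ↦ hJ n hf
  exact fun p q ↦ I.mem_or_mem_of_homogeneous_mem_or_mem hI
    (I.mem_or_mem_of_homogeneous_of_maximal hI hdisj hmax')

/-- A homogeneous two-sided ideal of an ℕ-graded ring, maximal among homogeneous
ideals disjoint from the powers of a non-nilpotent element, is prime. -/
theorem homogeneous_maximal_disjoint_powers_prime {R : Type*} [Ring R]
    (𝒜 : ℕ → AddSubgroup R) [GradedRing 𝒜]
    (a : R) (ha : ¬IsNilpotent a)
    (I : TwoSidedIdeal R)
    (hhom : ∀ f ∈ I, ∀ n : ℕ, (DirectSum.decompose 𝒜 f n : R) ∈ I)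
    (hdisj : ∀ n : ℕ, 1 ≤ n → a ^ n ∉ I)
    (hmax : ∀ J : TwoSidedIdeal R, (∀ f ∈ J, ∀ n : ℕ, (DirectSum.decompose 𝒜 f n : R) ∈ J) →
      (∀ n : ℕ, 1 ≤ n → a ^ n ∉ J) → I ≤ J → J = I) :
    ∀ p q : R, (∀ r : R, p * r * q ∈ I) → p ∈ I ∨ q ∈ I :=
  homogeneous_maximal_disjoint_powers_prime_general 𝒜 a I hhom hdisj hmax
end

section
/- Every non-nil ring R has a prime quotient that is non-nil: there exists a two-sided ideal I of R such that R/I is a prime ring and R/I is not nil. -/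
/-- Every non-nil ring has a prime quotient that is non-nil. -/
theorem nonNil_has_prime_nonNil_quotient {R : Type*} [Ring R]
    (hR : ¬∀ x : R, IsNilpotent x) :
    ∃ I : TwoSidedIdeal R,
      (∀ p q : I.ringCon.Quotient, (∀ r : I.ringCon.Quotient, p * r * q = 0) →
          p = 0 ∨ q = 0) ∧
        ¬∀ x : I.ringCon.Quotient, IsNilpotent x := by
  push_neg at hR
  obtain ⟨x, hx⟩ := hR
  -- The family of two-sided ideals avoiding all positive powers of `x`.
  set S : Set (TwoSidedIdeal R) := {I | ∀ n : ℕ, x ^ (n + 1) ∉ I} with hS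
  have hbot : (⊥ : TwoSidedIdeal R) ∈ S := by
    intro n hn
    rw [TwoSidedIdeal.mem_bot] at hn
    exact hx ⟨n + 1, hn⟩
  obtain ⟨I, -, hIS, hmax⟩ := zorn_le_nonempty₀ S (fun c hcS hc y hy => by
    refine ⟨TwoSidedIdeal.mk' (⋃ J ∈ c, (J : Set R)) ?_ ?_ ?_ ?_ ?_, ?_, ?_⟩
    · exact Set.mem_biUnion hy (TwoSidedIdeal.zero_mem y)
    · rintro u v hu hv
      simp only [Set.mem_iUnion, SetLike.mem_coe] at hu hv ⊢
      obtain ⟨J₁, hJ₁, hu⟩ := hu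
      obtain ⟨J₂, hJ₂, hv⟩ := hv
      rcases hc.total hJ₁ hJ₂ with h | h
      · exact ⟨J₂, hJ₂, J₂.add_mem (h hu) hv⟩
      · exact ⟨J₁, hJ₁, J₁.add_mem hu (h hv)⟩
    · rintro u hu
      simp only [Set.mem_iUnion, SetLike.mem_coe] at hu ⊢
      obtain ⟨J, hJ, hu⟩ := hu
      exact ⟨J, hJ, J.neg_mem hu⟩
    · rintro u v hv
      simp only [Set.mem_iUnion, SetLike.mem_coe] at hv ⊢
      obtain ⟨J, hJ, hv⟩ := hv
      exact ⟨J, hJ, J.mul_mem_left _ _ hv⟩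
    · rintro u v hu
      simp only [Set.mem_iUnion, SetLike.mem_coe] at hu ⊢
      obtain ⟨J, hJ, hu⟩ := hu
      exact ⟨J, hJ, J.mul_mem_right _ _ hu⟩
    · intro n hn
      rw [TwoSidedIdeal.mem_mk'] at hn
      simp only [Set.mem_iUnion, SetLike.mem_coe] at hn
      obtain ⟨J, hJ, hn⟩ := hn
      exact hcS hJ n hn
    · intro z hz w hw
      rw [TwoSidedIdeal.mem_mk']
      exact Set.mem_biUnion hz hw) ⊥ hbot
  refine ⟨I, ?_, ?_⟩
  · -- primality
    intro p q hpq
    obtain ⟨a, rfl⟩ : ∃ a : R, (a : I.ringCon.Quotient) = p := Quotient.exists_rep p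
    obtain ⟨b, rfl⟩ : ∃ b : R, (b : I.ringCon.Quotient) = q := Quotient.exists_rep q
    -- membership reformulation
    have key : ∀ r : R, a * r * b ∈ I := by
      intro r
      have h0 : ((a * r * b : R) : I.ringCon.Quotient) = ((0 : R) : I.ringCon.Quotient) := by
        rw [I.ringCon.coe_mul, I.ringCon.coe_mul, I.ringCon.coe_zero]
        exact hpq (r : R)
      have := (I.ringCon.eq).1 h0
      rw [TwoSidedIdeal.rel_iff] at this
      simpa using this
    by_contra hcon
    push_neg at hcon
    obtain ⟨hp, hq⟩ := hcon
    have ha : a ∉ I := by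
      intro ha
      refine hp ?_
      rw [← I.ringCon.coe_zero]
      exact (I.ringCon.eq).2 ((TwoSidedIdeal.rel_iff I a 0).2 (by simpa using ha))
    have hb : b ∉ I := by
      intro hb
      refine hq ?_
      rw [← I.ringCon.coe_zero]
      exact (I.ringCon.eq).2 ((TwoSidedIdeal.rel_iff I b 0).2 (by simpa using hb))
    -- the ideal I ⊔ span {a} contains some power of x
    have hsupa : I ⊔ TwoSidedIdeal.span {a} ∉ S := by
      intro h
      have := hmax h le_sup_left
      exact ha (this (SetLike.le_def.1 (le_sup_right (a := I)) (TwoSidedIdeal.subset_span rfl)))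
    have hsupb : I ⊔ TwoSidedIdeal.span {b} ∉ S := by
      intro h
      have := hmax h le_sup_left
      exact hb (this (SetLike.le_def.1 (le_sup_right (a := I)) (TwoSidedIdeal.subset_span rfl)))
    simp only [hS, Set.mem_setOf_eq, not_forall, not_not] at hsupa hsupb
    obtain ⟨m, hm⟩ := hsupa
    obtain ⟨n, hn⟩ := hsupb
    -- Step A: every u in I ⊔ span{a} satisfies ∀ r, u * r * b ∈ I
    have stepA : ∀ u ∈ I ⊔ TwoSidedIdeal.span {a}, ∀ r : R, u * r * b ∈ I := by
      have hle : I ⊔ TwoSidedIdeal.span {a} ≤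
          TwoSidedIdeal.mk' {u : R | ∀ r : R, u * r * b ∈ I}
            (by intro r; simpa using I.zero_mem)
            (by intro u v hu hv r
                have := I.add_mem (hu r) (hv r)
                simpa [add_mul] using this)
            (by intro u hu r
                have := I.neg_mem (hu r)
                simpa [neg_mul] using this)
            (by intro s u hu r
                have := I.mul_mem_left s _ (hu r)
                simpa [mul_assoc] using this)
            (by intro u s hu r
                have := hu (s * r)
                simpa [mul_assoc] using this) := by
        refine sup_le ?_ ?_
        · intro u hu
          rw [TwoSidedIdeal.mem_mk']
          intro r
          exact I.mul_mem_right _ _ (I.mul_mem_right _ _ hu)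
        · intro v hv
          refine TwoSidedIdeal.mem_span_iff.1 hv _ ?_
          rintro w rfl
          rw [SetLike.mem_coe, TwoSidedIdeal.mem_mk']
          exact key
      intro u hu r
      have := hle hu
      rw [TwoSidedIdeal.mem_mk'] at this
      exact this r
    -- Step B: fix u := x ^ (m+1); every v in I ⊔ span{b} satisfies u * v ∈ I
    have humem := stepA _ hm
    set u := x ^ (m + 1) with hu
    have stepB : ∀ v ∈ I ⊔ TwoSidedIdeal.span {b}, u * v ∈ I := by
      have hle : I ⊔ TwoSidedIdeal.span {b} ≤
          TwoSidedIdeal.mk' {v : R | u * v ∈ I ∧ ∀ s : R, u * s * v ∈ I}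
            (⟨by simpa using I.zero_mem, by intro s; simpa using I.zero_mem⟩)
            (by rintro v w ⟨hv1, hv2⟩ ⟨hw1, hw2⟩
                refine ⟨by simpa [mul_add] using I.add_mem hv1 hw1, fun s => ?_⟩
                simpa [mul_add] using I.add_mem (hv2 s) (hw2 s))
            (by rintro v ⟨hv1, hv2⟩
                refine ⟨by simpa [mul_neg] using I.neg_mem hv1, fun s => ?_⟩
                simpa [mul_neg] using I.neg_mem (hv2 s))
            (by rintro s v ⟨hv1, hv2⟩
                refine ⟨by simpa [mul_assoc] using hv2 s, fun t => ?_⟩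
                have := hv2 (t * s)
                simpa [mul_assoc] using this)
            (by rintro v s ⟨hv1, hv2⟩
                refine ⟨by simpa [mul_assoc] using I.mul_mem_right _ _ hv1, fun t => ?_⟩
                have := I.mul_mem_right _ s (hv2 t)
                simpa [mul_assoc] using this) := by
        refine sup_le ?_ ?_
        · intro v hv
          rw [TwoSidedIdeal.mem_mk']
          exact ⟨I.mul_mem_left _ _ hv, fun s => I.mul_mem_left _ _ hv⟩
        · intro v hv
          refine TwoSidedIdeal.mem_span_iff.1 hv _ ?_
          rintro w rfl
          rw [SetLike.mem_coe, TwoSidedIdeal.mem_mk']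
          exact ⟨by simpa using humem 1, humem⟩
      intro v hv
      have := hle hv
      rw [TwoSidedIdeal.mem_mk'] at this
      exact this.1
    have : x ^ (m + n + 2) ∈ I := by
      have := stepB _ hn
      rw [hu, ← pow_add] at this
      convert this using 2
      ring
    exact hIS (m + n + 1) this
  · -- non-nil
    intro h
    obtain ⟨n, hn⟩ := h (x : I.ringCon.Quotient)
    have hxn : x ^ n ∈ I := by
      have h0 : ((x ^ n : R) : I.ringCon.Quotient) = ((0 : R) : I.ringCon.Quotient) := by
        rw [I.ringCon.coe_pow, I.ringCon.coe_zero]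
        exact hn
      have := (I.ringCon.eq).1 h0
      rw [TwoSidedIdeal.rel_iff] at this
      simpa using this
    exact hIS n (by simpa [pow_succ'] using I.mul_mem_left x _ hxn)
end

section
/- Let R be an ℕ-graded ring generated in degree 1, i.e. R = ⊕_{n≥1} R(n) with R(n) = R(1)^n. If every homogeneous element of R is nilpotent and some element of R[X] (with X of degree 0, i.e. coefficients graded) that is homogeneous of positive degree is not nilpotent, then R[X] is not a Jacobson radical ring. -/
/-- Iterated product in a non-unital ring: `npow x n = x^(n+1)`. -/
def npow {R : Type*} [NonUnitalRing R] (x : R) : ℕ → R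
  | 0 => x
  | n + 1 => x * npow x n

/-- The polynomial ring `P[X]` over a possibly non-unital ring `P`, realized as
the non-unital subring of `(Unitization ℤ P)[X]` of polynomials all of whose
coefficients lie in `P` (i.e. have zero scalar part). -/
def polyNU (P : Type*) [NonUnitalRing P] :
    NonUnitalSubring (@Polynomial (Unitization ℤ P) Ring.toSemiring) where
  carrier := {f | ∀ n : ℕ, (f.coeff n).fst = 0}
  add_mem' := by
    intro a b ha hb n
    simp [ha n, hb n]
  zero_mem' := by intro n; simp
  neg_mem' := by
    intro a ha n
    simp [ha n]
  mul_mem' := by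
    intro a b ha hb n
    rw [Polynomial.coeff_mul]
    have : ((∑ x ∈ Finset.HasAntidiagonal.antidiagonal n, a.coeff x.1 * b.coeff x.2).fst)
        = ∑ x ∈ Finset.HasAntidiagonal.antidiagonal n, (a.coeff x.1 * b.coeff x.2).fst :=
      map_sum (Unitization.fstHom ℤ P) _ _
    rw [this]
    apply Finset.sum_eq_zero
    intro x _
    simp [ha x.1]

/-!
Grade `R[X]` coefficientwise, `R[X](m) = R(m)[X]`. If `p` is homogeneous of degree `n ≥ 1` and
`p + q + p * q = 0`, comparing the components of degree `(k + 1) * n` gives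
`q_{(k+1)n} = (-p)^(k+1)`. Only finitely many components of `q` are nonzero, so `p` is nilpotent.
-/

theorem npow_neg {R : Type*} [NonUnitalRing R] (x : R) (k : ℕ) :
    npow (-x) k = (-1 : ℤ) ^ (k + 1) • npow x k := by
  induction k with
  | zero => simp [npow]
  | succ k ih => rw [npow, npow, ih, pow_succ' _ (k + 1), mul_smul, neg_mul, mul_smul_comm,
      neg_one_zsmul]

theorem iSupIndep_of_map_le {M N ι κ : Type*} [AddCommGroup M] [AddCommGroup N]
    {A : ι → AddSubgroup N} {B : ι → AddSubgroup M} (hA : iSupIndep A) (φ : κ → M →+ N)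
    (hφ : ∀ x, (∀ t, φ t x = 0) → x = 0) (hB : ∀ t i, (B i).map (φ t) ≤ A i) :
    iSupIndep B := by
  intro i
  rw [AddSubgroup.disjoint_def]
  intro x hxi hx
  refine hφ x fun t => AddSubgroup.disjoint_def.1 (hA i) (hB t i ⟨x, hxi, rfl⟩) ?_
  have hmap : (⨆ j ≠ i, B j).map (φ t) ≤ ⨆ j ≠ i, A j :=
    AddSubgroup.map_le_iff_le_comap.2 <| iSup₂_le fun j hj =>
      AddSubgroup.map_le_iff_le_comap.1 <| (hB t j).trans <| le_iSup₂ (f := fun j _ => A j) j hj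
  exact hmap ⟨x, hx, rfl⟩

namespace DirectSum

variable {ι S : Type*} [DecidableEq ι] [NonUnitalRing S] (B : ι → AddSubgroup S)
  [Decomposition B]

theorem coe_decompose_mul_add_of_left_mem' [AddLeftCancelMonoid ι]
    (hmul : ∀ m n : ι, ∀ a ∈ B m, ∀ b ∈ B n, a * b ∈ B (m + n))
    {m : ι} {a : S} (ha : a ∈ B m) (b : S) (j : ι) :
    (decompose B (a * b) (m + j) : S) = a * decompose B b j := by
  classical
  have hterm : ∀ i, (decompose B (a * decompose B b i) (m + j) : S) =
      if i = j then a * decompose B b j else 0 := by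
    intro i
    have hmem := hmul m i a ha _ (decompose B b i).2
    split_ifs with h
    · subst h; exact decompose_of_mem_same B hmem
    · exact decompose_of_mem_ne B hmem (by simpa using h)
  conv_lhs => rw [← sum_support_decompose B b, Finset.mul_sum]
  rw [decompose_sum, DFinsupp.finsetSum_apply, AddSubgroup.val_finsetSum]
  simp only [hterm, Finset.sum_ite_eq']
  split_ifs with h
  · rfl
  · rw [DFinsupp.notMem_support_iff.1 h, ZeroMemClass.coe_zero, mul_zero]

end DirectSum

section QuasiRegular

open DirectSum

variable {S : Type*} [NonUnitalRing S] (B : ℕ → AddSubgroup S) [Decomposition B]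
  (hmul : ∀ m n : ℕ, ∀ a ∈ B m, ∀ b ∈ B n, a * b ∈ B (m + n)) (hB0 : B 0 = ⊥)
  {n : ℕ} {x y : S} (hx : x ∈ B n) (hxy : x + y + x * y = 0)
include hmul hB0 hx hxy

theorem coe_decompose_quasiInverse (hn : 0 < n) (k : ℕ) :
    (decompose B y ((k + 1) * n) : S) = npow (-x) k := by
  have hstep : ∀ j,
      (decompose B y (n + j) : S) = -decompose B x (n + j) - x * decompose B y j := by
    intro j
    have h := congrArg (fun z => (decompose B z (n + j) : S)) hxy
    simp only [decompose_add, DirectSum.add_apply, AddSubgroup.coe_add, decompose_zero,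
      DirectSum.zero_apply, ZeroMemClass.coe_zero,
      coe_decompose_mul_add_of_left_mem' B hmul hx] at h
    rw [← sub_eq_zero, ← h]
    abel
  induction k with
  | zero =>
    have hy0 : (decompose B y 0 : S) = 0 := by
      simpa [hB0] using (decompose B y 0).2
    rw [zero_add, one_mul, ← add_zero n, hstep, add_zero, decompose_of_mem_same B hx, hy0,
      mul_zero, sub_zero, npow]
  | succ k ih =>
    rw [show (k + 1 + 1) * n = n + (k + 1) * n by ring, hstep, ih,
      decompose_of_mem_ne B hx (by nlinarith), neg_zero, zero_sub, npow, neg_mul]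

theorem exists_npow_eq_zero_of_quasiInverse (hn : 0 < n) : ∃ k, npow x k = 0 := by
  classical
  obtain ⟨N, hN⟩ := Finset.exists_nat_subset_range (decompose B y).support
  refine ⟨N, ?_⟩
  have hout : (N + 1) * n ∉ (decompose B y).support := fun h => by
    have := Finset.mem_range.1 (hN h)
    nlinarith
  have hneg : npow (-x) N = 0 := by
    rw [← coe_decompose_quasiInverse B hmul hB0 hx hxy hn, DFinsupp.notMem_support_iff.1 hout]
    rfl
  rw [← neg_neg x, npow_neg, hneg, smul_zero]

end QuasiRegular

namespace polyNU

open DirectSum Finset.HasAntidiagonal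

variable {R : Type*} [NonUnitalRing R]

def coeff (t : ℕ) : polyNU R →+ R where
  toFun f := ((f : Polynomial (Unitization ℤ R)).coeff t).snd
  map_zero' := rfl
  map_add' _ _ := rfl

theorem ext {f g : polyNU R} (h : ∀ t, coeff t f = coeff t g) : f = g :=
  Subtype.ext <| Polynomial.ext fun t => Unitization.ext ((f.2 t).trans (g.2 t).symm) (h t)

theorem coeff_mul (f g : polyNU R) (t : ℕ) :
    coeff t (f * g) = ∑ x ∈ antidiagonal t, coeff x.1 f * coeff x.2 g := by
  change ((f * g : Polynomial (Unitization ℤ R)).coeff t).snd = _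
  rw [Polynomial.coeff_mul, ← Unitization.sndHom_apply (S := ℤ), map_sum]
  exact Finset.sum_congr rfl fun x _ => by simp [f.2 x.1, g.2 x.2]; rfl

noncomputable def monomial (t : ℕ) : R →+ polyNU R where
  toFun r := ⟨Polynomial.monomial t (r : Unitization ℤ R), fun s => by
    rw [Polynomial.coeff_monomial]; split_ifs <;> rfl⟩
  map_zero' := Subtype.ext (by simp)
  map_add' _ _ := Subtype.ext (by simp)

theorem coeff_monomial (s t : ℕ) (r : R) :
    coeff s (monomial t r) = if t = s then r else 0 := by
  change ((Polynomial.monomial t (r : Unitization ℤ R)).coeff s).snd = _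
  rw [Polynomial.coeff_monomial]
  split_ifs <;> rfl

theorem sum_monomial_coeff (f : polyNU R) :
    ∑ t ∈ Finset.range ((f : Polynomial (Unitization ℤ R)).natDegree + 1),
      monomial t (coeff t f) = f := by
  refine ext fun s => ?_
  simp only [map_sum, coeff_monomial, Finset.sum_ite_eq', Finset.mem_range]
  split_ifs with hs
  · rfl
  · change 0 = ((f : Polynomial (Unitization ℤ R)).coeff s).snd
    rw [Polynomial.coeff_eq_zero_of_natDegree_lt (by omega), Unitization.snd_zero]

noncomputable def grade {ι : Type*} (A : ι → AddSubgroup R) (m : ι) :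
    AddSubgroup (polyNU R) :=
  ⨅ t, (A m).comap (coeff t)

variable {ι : Type*} {A : ι → AddSubgroup R}

theorem mem_grade {m : ι} {f : polyNU R} : f ∈ grade A m ↔ ∀ t, coeff t f ∈ A m := by
  simp [grade]

theorem monomial_mem_grade {m : ι} {r : R} (hr : r ∈ A m) (t : ℕ) :
    monomial t r ∈ grade A m :=
  mem_grade.2 fun s => by
    rw [coeff_monomial]
    split_ifs
    exacts [hr, zero_mem _]

theorem grade_mul_mem [Add ι]
    (hmul : ∀ m n : ι, ∀ a ∈ A m, ∀ b ∈ A n, a * b ∈ A (m + n))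
    (m n : ι) (f : polyNU R) (hf : f ∈ grade A m) (g : polyNU R) (hg : g ∈ grade A n) :
    f * g ∈ grade A (m + n) :=
  mem_grade.2 fun t => by
    rw [coeff_mul]
    exact sum_mem fun x _ => hmul m n _ (mem_grade.1 hf x.1) _ (mem_grade.1 hg x.2)

theorem grade_eq_bot {m : ι} (hm : A m = ⊥) : grade A m = ⊥ :=
  (AddSubgroup.eq_bot_iff_forall _).2 fun f hf =>
    ext fun t => by simpa [hm] using mem_grade.1 hf t

theorem iSupIndep_grade (hA : iSupIndep A) : iSupIndep (grade A) :=
  iSupIndep_of_map_le hA coeff (fun _ hf => ext hf) fun t _ =>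
    AddSubgroup.map_le_iff_le_comap.2 fun _ hf => mem_grade.1 hf t

theorem isInternal_grade [DecidableEq ι] (hA : IsInternal A) : IsInternal (grade A) := by
  refine ⟨(iSupIndep_grade hA.addSubgroup_iSupIndep).dfinsuppSumAddHom_injective, fun f => ?_⟩
  have hmono : ∀ t r, monomial t r ∈ (DirectSum.coeAddMonoidHom (grade A)).range := by
    intro t r
    obtain ⟨d, rfl⟩ := hA.2 r
    induction d using DirectSum.induction_on with
    | zero => simp
    | of m a => exact ⟨of _ m ⟨_, monomial_mem_grade a.2 t⟩, by simp⟩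
    | add d e hd he => rw [map_add, map_add]; exact add_mem hd he
  rw [← sum_monomial_coeff f]
  exact sum_mem fun t _ => hmono t _

end polyNU

theorem poly_not_radical_of_homogeneous_nonnilpotent_general {R : Type*} [NonUnitalRing R]
    (A : ℕ → AddSubgroup R)
    (hinternal : DirectSum.IsInternal A)
    (hmul : ∀ m n : ℕ, ∀ a ∈ A m, ∀ b ∈ A n, a * b ∈ A (m + n))
    (h0 : A 0 = ⊥)
    (hex : ∃ p : (polyNU R), (∃ n : ℕ, 1 ≤ n ∧
        ∀ k : ℕ, ((p : Polynomial (Unitization ℤ R)).coeff k).snd ∈ A n) ∧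
      ¬∃ m : ℕ, npow p m = 0) :
    ¬∀ f : (polyNU R), ∃ g : (polyNU R), f + g + f * g = 0 := by
  intro hradical
  obtain ⟨p, ⟨n, hn, hp⟩, hp_not_nil⟩ := hex
  obtain ⟨q, hpq⟩ := hradical p
  let _ := (polyNU.isInternal_grade hinternal).chooseDecomposition
  exact hp_not_nil <| exists_npow_eq_zero_of_quasiInverse (polyNU.grade A)
    (polyNU.grade_mul_mem hmul) (polyNU.grade_eq_bot h0) (polyNU.mem_grade.2 hp) hpq hn

/-- `R` graded in positive degrees with every homogeneous element nilpotent: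
if some homogeneous element of positive degree of `R[X]` (with `X` of degree `0`)
is not nilpotent, then `R[X]` is not Jacobson radical. -/
theorem poly_not_radical_of_homogeneous_nonnilpotent {R : Type*} [NonUnitalRing R]
    (A : ℕ → AddSubgroup R)
    (hinternal : DirectSum.IsInternal A)
    (hmul : ∀ m n : ℕ, ∀ a ∈ A m, ∀ b ∈ A n, a * b ∈ A (m + n))
    (h0 : A 0 = ⊥)
    (hgen : ∀ n : ℕ, 1 ≤ n → A (n + 1) =
      AddSubgroup.closure {z : R | ∃ x ∈ A n, ∃ y ∈ A 1, z = x * y})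
    (hnil : ∀ n : ℕ, ∀ x ∈ A n, ∃ k : ℕ, npow x k = 0)
    (hex : ∃ p : (polyNU R), (∃ n : ℕ, 1 ≤ n ∧
        ∀ k : ℕ, ((p : Polynomial (Unitization ℤ R)).coeff k).snd ∈ A n) ∧
      ¬∃ m : ℕ, npow p m = 0) :
    ¬∀ f : (polyNU R), ∃ g : (polyNU R), f + g + f * g = 0 :=
  poly_not_radical_of_homogeneous_nonnilpotent_general A hinternal hmul h0 hex
end

section
/- Let K be a field and A the free associative K-algebra on x, y. Let U, U' be K-subspaces with U ⊆ A(2^n) (the span of degree-2^n monomials) and set T = A(2^n)·U + U·A(2^n) ⊆ A(2^{n+1}). Suppose i < j are minimal with w(2^n, i) ∉ U and w(2^n, j) ∉ U + K·w(2^n, i). Then w(2^{n+1}, 2i) ≡ w(2^n, i)·w(2^n, i) (mod T). -/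
open Polynomial in
/-- A monomial of degree `n` in the free algebra `K⟨x,y⟩` (on generators
indexed by `Fin 2`, with `0 ↦ x` and `1 ↦ y`), given by a word `f`. -/
noncomputable def mono (K : Type*) [Field K] {n : ℕ} (f : Fin n → Fin 2) :
    FreeAlgebra K (Fin 2) :=
  (List.ofFn fun k => FreeAlgebra.ι K (f k)).prod

/-- `w K n i` is the sum of all monomials of degree `n` in `x, y` with exactly
`i` occurrences of `x`. -/
noncomputable def w (K : Type*) [Field K] (n i : ℕ) : FreeAlgebra K (Fin 2) :=
  ∑ f ∈ Finset.univ.filter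
      (fun f : Fin n → Fin 2 => (Finset.univ.filter fun k => f k = 0).card = i),
    mono K f

/-- The span of the monomials of degree `n` in the free algebra `K⟨x,y⟩`. -/
noncomputable def Adeg (K : Type*) [Field K] (n : ℕ) :
    Submodule K (FreeAlgebra K (Fin 2)) :=
  Submodule.span K (Set.range (mono K (n := n)))

/-! Cutting words of length `2 ^ (n + 1)` in half gives
`w(2^{n+1}, 2i) = ∑_{a + b = 2i} w(2^n, a) w(2^n, b)`. Every term other than `a = b = i` has a
factor `w(2^n, c)` with `c < i`, which lies in `U` by minimality of `i`. -/

open Finset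

lemma mono_append (K : Type*) [Field K] {m m' : ℕ} (f : Fin m → Fin 2) (g : Fin m' → Fin 2) :
    mono K (Fin.append f g) = mono K f * mono K g := by
  rw [mono, mono, mono, ← List.prod_append, ← List.ofFn_fin_append]
  congr 2
  funext k
  induction k using Fin.addCases <;> simp

lemma card_filter_append_eq {α : Type*} [DecidableEq α] {m m' : ℕ} (f : Fin m → α)
    (g : Fin m' → α) (a : α) :
    #{k | Fin.append f g k = a} = #{k | f k = a} + #{k | g k = a} := by
  simp only [card_filter, Fin.sum_univ_add, Fin.append_left, Fin.append_right]

lemma w_add (K : Type*) [Field K] (m m' s : ℕ) :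
    w K (m + m') s = ∑ p ∈ antidiagonal s, w K m p.1 * w K m' p.2 := by
  calc w K (m + m') s
      = ∑ f : Fin m → Fin 2, ∑ g : Fin m' → Fin 2,
          if #{k | f k = 0} + #{k | g k = 0} = s then mono K f * mono K g else 0 := by
        rw [w, sum_filter, ← Fintype.sum_prod_type', ← (Fin.appendEquiv m m').sum_comp]
        refine Fintype.sum_congr _ _ fun fg => ?_
        change (if #{k | Fin.append fg.1 fg.2 k = 0} = s then mono K (Fin.append fg.1 fg.2)
          else 0) = _
        rw [card_filter_append_eq, mono_append]
    _ = ∑ p ∈ antidiagonal s, w K m p.1 * w K m' p.2 := by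
        simp only [w, sum_filter, sum_mul_sum, ite_zero_mul_ite_zero]
        symm
        rw [sum_comm]
        refine sum_congr rfl fun f _ => ?_
        rw [sum_comm]
        refine sum_congr rfl fun g _ => ?_
        have hpair (p : ℕ × ℕ) : (#{k | f k = 0} = p.1 ∧ #{k | g k = 0} = p.2) ↔
            (#{k | f k = 0}, #{k | g k = 0}) = p := by
          rw [Prod.ext_iff]
        simp only [hpair, sum_ite_eq, HasAntidiagonal.mem_antidiagonal]

lemma w_mem_Adeg (K : Type*) [Field K] (m s : ℕ) : w K m s ∈ Adeg K m :=
  Submodule.sum_mem _ fun f _ => Submodule.subset_span ⟨f, rfl⟩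

theorem w_square_congruence_general {K : Type*} [Field K] (n i : ℕ)
    (U : Submodule K (FreeAlgebra K (Fin 2)))
    (himin : ∀ i' : ℕ, i' < i → w K (2 ^ n) i' ∈ U) :
    w K (2 ^ (n + 1)) (2 * i) - w K (2 ^ n) i * w K (2 ^ n) i ∈
      Adeg K (2 ^ n) * U + U * Adeg K (2 ^ n) := by
  have hii : (i, i) ∈ antidiagonal (2 * i) := by simp [two_mul]
  rw [pow_succ, mul_two, w_add, ← add_sum_erase _ _ hii, add_sub_cancel_left]
  refine Submodule.sum_mem _ fun p hp => ?_
  obtain ⟨hne, hsum⟩ : p ≠ (i, i) ∧ p.1 + p.2 = 2 * i := by simpa using hp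
  rcases lt_or_gt_of_ne (fun h : p.1 = i => hne (Prod.ext h (by omega))) with hlt | hgt
  · exact Submodule.mem_sup_right (Submodule.mul_mem_mul (himin _ hlt) (w_mem_Adeg K _ _))
  · exact Submodule.mem_sup_left (Submodule.mul_mem_mul (w_mem_Adeg K _ _) (himin _ (by omega)))

/-- If `i < j` are minimal with `w(2^n,i) ∉ U` and
`w(2^n,j) ∉ U + K·w(2^n,i)`, then
`w(2^{n+1}, 2i) ≡ w(2^n,i)·w(2^n,i)` modulo `T = A(2^n)U + U A(2^n)`. -/
theorem w_square_congruence {K : Type*} [Field K] (n i j : ℕ)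
    (U : Submodule K (FreeAlgebra K (Fin 2))) (hU : U ≤ Adeg K (2 ^ n))
    (hij : i < j)
    (hi : w K (2 ^ n) i ∉ U)
    (himin : ∀ i' : ℕ, i' < i → w K (2 ^ n) i' ∈ U)
    (hj : w K (2 ^ n) j ∉ U ⊔ Submodule.span K {w K (2 ^ n) i})
    (hjmin : ∀ j' : ℕ, i < j' → j' < j →
      w K (2 ^ n) j' ∈ U ⊔ Submodule.span K {w K (2 ^ n) i}) :
    w K (2 ^ (n + 1)) (2 * i) - w K (2 ^ n) i * w K (2 ^ n) i ∈
      Adeg K (2 ^ n) * U + U * Adeg K (2 ^ n) :=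
  w_square_congruence_general n i U himin
end

section
/- Let K be a field and V a 2-dimensional subspace of a K-vector space spanned by two distinct monomials m1, m2 from a basis of monomials of A(2^n) in the free algebra A = K⟨x,y⟩. Then A(2^{n+1}) = A(2^n)A(2^n) decomposes as a direct sum U(2^n)U(2^n) ⊕ U(2^n)V ⊕ V U(2^n) ⊕ m1 V ⊕ m2 V, whenever A(2^n) = U(2^n) ⊕ V. -/
/-!
Words multiply to words, so `A(m) A(n) = A(m + n)`. Cutting every word after its first `m`
letters gives a linear map `Φ : A → A ⊗ A` with `Φ (x y) = x ⊗ y` for `x ∈ A(m)`; hence for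
linear maps `p, q` the map `μ ∘ (p ⊗ q) ∘ Φ` sends `x y` to `p x * q y`. Distinct monomials
are linearly independent, so `A(2^n) = U ⊕ K m1 ⊕ K m2`, and projections adapted to this
decomposition yield, for each of `UU, UV, VU, m1 V, m2 V`, a linear map fixing it and killing
the other four. Their sum is `(U + V)(U + V) = A(2^(n+1))`.
-/

open FreeAlgebra TensorProduct Submodule Pointwise

section Independence

variable {K M ι : Type*} [DivisionRing K] [AddCommGroup M] [Module K M]

theorem Submodule.exists_projection_of_disjoint {X Y : Submodule K M} (h : Disjoint X Y) :
    ∃ p : M →ₗ[K] M, X ≤ LinearMap.eqLocus p LinearMap.id ∧ Y ≤ LinearMap.ker p := by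
  obtain ⟨Y', hYY', hc⟩ := h.symm.exists_isCompl
  refine ⟨X.projection Y' hc.symm, fun x hx => ?_, fun y hy => ?_⟩
  · exact projection_apply_of_mem_left hc.symm hx
  · rw [LinearMap.mem_ker, ← LinearMap.mem_ker, ker_projection]
    exact hYY' hy

theorem iSupIndep.exists_projection_biSup {X : ι → Submodule K M} (hX : iSupIndep X)
    (s : Finset ι) :
    ∃ p : M →ₗ[K] M, (⨆ i ∈ s, X i) ≤ LinearMap.eqLocus p LinearMap.id ∧
      ∀ j ∉ s, X j ≤ LinearMap.ker p := by
  have hdisj : Disjoint (⨆ i ∈ (s : Set ι), X i) (⨆ j ∈ (s : Set ι)ᶜ, X j) :=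
    hX.disjoint_biSup_biSup' disjoint_compl_right s.finite_toSet
  simp only [Finset.mem_coe] at hdisj
  obtain ⟨p, hp, hker⟩ := exists_projection_of_disjoint hdisj
  exact ⟨p, hp, fun j hj => (le_biSup X (Set.mem_compl hj)).trans hker⟩

theorem iSupIndep_of_exists_projection {R : Type*} [Ring R] [Module R M] {F : ι → Submodule R M}
    (h : ∀ i, ∃ p : M →ₗ[R] M,
      F i ≤ LinearMap.eqLocus p LinearMap.id ∧ ∀ j ≠ i, F j ≤ LinearMap.ker p) :
    iSupIndep F := by
  intro i
  obtain ⟨p, hp, hker⟩ := h i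
  rw [Submodule.disjoint_def]
  intro x hx hx'
  calc x = p x := (hp hx).symm
    _ = 0 := iSup₂_le hker hx'

theorem Module.Basis.disjoint_span_singleton {R : Type*} [Ring R] [Module R M]
    (b : Module.Basis ι R M) {i j : ι} (h : i ≠ j) : Disjoint (R ∙ b i) (R ∙ b j) := by
  simpa only [Set.image_singleton] using
    b.linearIndependent.disjoint_span_image (Set.disjoint_singleton.2 h)

theorem iSupIndep_fin_three_of_disjoint {α : Type*} [CompleteLattice α] [IsModularLattice α]
    {a b c : α} (ha : Disjoint a (b ⊔ c)) (hbc : Disjoint b c) : iSupIndep ![a, b, c] := by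
  refine iSupIndep_fin_three.2 ⟨ha, ?_, ?_⟩
  · exact hbc.disjoint_sup_right_of_disjoint_sup_left ha.symm
  · rw [sup_comm]
    exact hbc.symm.disjoint_sup_right_of_disjoint_sup_left (sup_comm b c ▸ ha.symm)

end Independence

theorem Submodule.iSup_biSup_mul_biSup {R A ι κ : Type*} [CommSemiring R] [Semiring A]
    [Algebra R A] {X : ι → Submodule R A} {s t : κ → Finset ι}
    (hst : ∀ i j, ∃ k, i ∈ s k ∧ j ∈ t k) :
    ⨆ k, (⨆ i ∈ s k, X i) * ⨆ j ∈ t k, X j = (⨆ i, X i) * ⨆ j, X j := by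
  refine le_antisymm (iSup_le fun k => mul_le_mul' (iSup₂_le_iSup _ X) (iSup₂_le_iSup _ X)) ?_
  rw [iSup_mul]
  refine iSup_le fun i => ?_
  rw [mul_iSup]
  refine iSup_le fun j => ?_
  obtain ⟨k, hi, hj⟩ := hst i j
  exact le_iSup_of_le k (mul_le_mul' (le_biSup X hi) (le_biSup X hj))

theorem FreeMonoid.setOf_length_mul {α : Type*} (m n : ℕ) :
    {v : FreeMonoid α | v.length = m} * {v : FreeMonoid α | v.length = n} =
      {v : FreeMonoid α | v.length = m + n} := by
  ext w
  constructor
  · rintro ⟨u, hu, v, hv, rfl⟩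
    simp_all [FreeMonoid.length_mul]
  · intro hw
    refine ⟨.ofList (w.toList.take m), ?_, .ofList (w.toList.drop m), ?_, ?_⟩
    · simp_all [FreeMonoid.length]
    · simp_all [FreeMonoid.length]
    · simp [← FreeMonoid.ofList_append]

namespace FreeAlgebra

variable {R α : Type*} [CommSemiring R]

theorem basisFreeMonoid_eq_lift (w : FreeMonoid α) :
    basisFreeMonoid R α w = FreeMonoid.lift (ι R) w := by
  apply (equivMonoidAlgebraFreeMonoid (R := R) (X := α)).injective
  have h : (equivMonoidAlgebraFreeMonoid (R := R) (X := α)).toMonoidHom.comp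
      (FreeMonoid.lift (ι R)) = MonoidAlgebra.of R (FreeMonoid α) :=
    FreeMonoid.hom_eq fun x => by simp [equivMonoidAlgebraFreeMonoid]
  refine Eq.trans ?_ (DFunLike.congr_fun h w).symm
  simp [basisFreeMonoid]

theorem basisFreeMonoid_mul (v w : FreeMonoid α) :
    basisFreeMonoid R α (v * w) = basisFreeMonoid R α v * basisFreeMonoid R α w := by
  simp only [basisFreeMonoid_eq_lift, map_mul]

theorem span_basisFreeMonoid_length_mul (m n : ℕ) :
    span R (basisFreeMonoid R α '' {v | v.length = m}) *
        span R (basisFreeMonoid R α '' {v | v.length = n}) =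
      span R (basisFreeMonoid R α '' {v | v.length = m + n}) := by
  rw [span_mul_span, ← FreeMonoid.setOf_length_mul, funext basisFreeMonoid_eq_lift,
    Set.image_mul]

variable (R α) in
noncomputable def splitAt (m : ℕ) :
    FreeAlgebra R α →ₗ[R] FreeAlgebra R α ⊗[R] FreeAlgebra R α :=
  (basisFreeMonoid R α).constr R fun w =>
    basisFreeMonoid R α (.ofList (w.toList.take m)) ⊗ₜ
      basisFreeMonoid R α (.ofList (w.toList.drop m))

theorem splitAt_basisFreeMonoid_mul {m : ℕ} {v : FreeMonoid α} (hv : v.length = m)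
    (y : FreeAlgebra R α) :
    splitAt R α m (basisFreeMonoid R α v * y) = basisFreeMonoid R α v ⊗ₜ y := by
  have : splitAt R α m ∘ₗ LinearMap.mulLeft R (basisFreeMonoid R α v) =
      TensorProduct.mk R _ _ (basisFreeMonoid R α v) := by
    refine (basisFreeMonoid R α).ext fun w => ?_
    simp [splitAt, ← basisFreeMonoid_mul, ← hv, FreeMonoid.length]
  exact LinearMap.congr_fun this y

theorem splitAt_mul {m : ℕ} {x : FreeAlgebra R α}
    (hx : x ∈ span R (basisFreeMonoid R α '' {v | v.length = m})) (y : FreeAlgebra R α) :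
    splitAt R α m (x * y) = x ⊗ₜ y := by
  refine LinearMap.eqOn_span (f := splitAt R α m ∘ₗ LinearMap.mulRight R y)
    (g := (TensorProduct.mk R _ _).flip y) ?_ hx
  rintro _ ⟨v, hv, rfl⟩
  exact splitAt_basisFreeMonoid_mul hv y

variable (R α) in
noncomputable def mapSplitAt (m : ℕ) (p q : FreeAlgebra R α →ₗ[R] FreeAlgebra R α) :
    FreeAlgebra R α →ₗ[R] FreeAlgebra R α :=
  LinearMap.mul' R _ ∘ₗ TensorProduct.map p q ∘ₗ splitAt R α m

theorem mapSplitAt_mul {m : ℕ} {p q : FreeAlgebra R α →ₗ[R] FreeAlgebra R α}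
    {x : FreeAlgebra R α} (hx : x ∈ span R (basisFreeMonoid R α '' {v | v.length = m}))
    (y : FreeAlgebra R α) :
    mapSplitAt R α m p q (x * y) = p x * q y := by
  simp [mapSplitAt, splitAt_mul hx]

theorem iSupIndep_biSup_mul_biSup {K ι κ : Type*} [Field K]
    {X : ι → Submodule K (FreeAlgebra K α)} (hX : iSupIndep X) {m : ℕ}
    (hXm : ∀ i, X i ≤ span K (basisFreeMonoid K α '' {v | v.length = m}))
    {s t : κ → Finset ι}
    (hst : ∀ k l, k ≠ l → Disjoint (s k) (s l) ∨ Disjoint (t k) (t l)) :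
    iSupIndep fun k => (⨆ i ∈ s k, X i) * ⨆ j ∈ t k, X j := by
  refine iSupIndep_of_exists_projection fun k => ?_
  obtain ⟨p, hp, hpker⟩ := hX.exists_projection_biSup (s k)
  obtain ⟨q, hq, hqker⟩ := hX.exists_projection_biSup (t k)
  have hXm' : ∀ l, (⨆ i ∈ s l, X i) ≤ span K (basisFreeMonoid K α '' {v | v.length = m}) :=
    fun l => iSup₂_le fun i _ => hXm i
  refine ⟨mapSplitAt K α m p q, mul_le.2 fun x hx y hy => ?_,
    fun l hlk => mul_le.2 fun x hx y hy => ?_⟩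
  · rw [LinearMap.mem_eqLocus, mapSplitAt_mul (hXm' k hx), hp hx, hq hy]
    rfl
  · rw [LinearMap.mem_ker, mapSplitAt_mul (hXm' l hx)]
    rcases hst k l hlk.symm with h | h
    · rw [iSup₂_le (fun i hi => hpker i (Finset.disjoint_right.1 h hi)) hx, zero_mul]
    · rw [iSup₂_le (fun j hj => hqker j (Finset.disjoint_right.1 h hj)) hy, mul_zero]

end FreeAlgebra

section Adeg

variable {K : Type*} [Field K]

theorem mono_eq_basisFreeMonoid {n : ℕ} (f : Fin n → Fin 2) :
    mono K f = basisFreeMonoid K (Fin 2) (.ofList (List.ofFn f)) := by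
  simp [mono, basisFreeMonoid_eq_lift, List.map_ofFn, Function.comp_def]

theorem range_mono (n : ℕ) :
    Set.range (mono K (n := n)) = basisFreeMonoid K (Fin 2) '' {v | v.length = n} := by
  ext x
  constructor
  · rintro ⟨f, rfl⟩
    exact ⟨_, by simp [FreeMonoid.length], (mono_eq_basisFreeMonoid f).symm⟩
  · rintro ⟨v, hv, rfl⟩
    subst hv
    exact ⟨v.toList.get, (mono_eq_basisFreeMonoid (n := v.toList.length) _).trans
      (by rw [List.ofFn_get, FreeMonoid.ofList_toList])⟩

theorem Adeg_eq_span (n : ℕ) :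
    Adeg K n = span K (basisFreeMonoid K (Fin 2) '' {v | v.length = n}) := by
  rw [Adeg, range_mono]

theorem Adeg_mul_Adeg (m n : ℕ) : Adeg K m * Adeg K n = Adeg K (m + n) := by
  simp only [Adeg_eq_span, span_basisFreeMonoid_length_mul]

end Adeg

/-- If `A(2^n) = U ⊕ V` with `V` spanned by two distinct monomials `m1, m2`,
then `A(2^{n+1}) = UU ⊕ UV ⊕ VU ⊕ m1V ⊕ m2V`. -/
theorem decomposition_of_square {K : Type*} [Field K] (n : ℕ)
    (U V : Submodule K (FreeAlgebra K (Fin 2)))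
    (m1 m2 : FreeAlgebra K (Fin 2))
    (hm1 : ∃ f : Fin (2 ^ n) → Fin 2, m1 = mono K f)
    (hm2 : ∃ f : Fin (2 ^ n) → Fin 2, m2 = mono K f)
    (hne : m1 ≠ m2)
    (hV : V = Submodule.span K {m1, m2})
    (hsum : U ⊔ V = Adeg K (2 ^ n))
    (hdisj : U ⊓ V = ⊥) :
    (⨆ i, ![U * U, U * V, V * U, Submodule.span K {m1} * V,
        Submodule.span K {m2} * V] i) = Adeg K (2 ^ (n + 1)) ∧
      iSupIndep ![U * U, U * V, V * U, Submodule.span K {m1} * V,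
        Submodule.span K {m2} * V] := by
  obtain ⟨f1, rfl⟩ := hm1
  obtain ⟨f2, rfl⟩ := hm2
  rw [span_insert] at hV
  set X := ![U, K ∙ mono K f1, K ∙ mono K f2]
  have hXsup : ⨆ i, X i = Adeg K (2 ^ n) := by
    simpa [X, sup_assoc, ← hV] using hsum
  have hm : Disjoint (K ∙ mono K f1) (K ∙ mono K f2) := by
    rw [mono_eq_basisFreeMonoid, mono_eq_basisFreeMonoid] at hne ⊢
    exact (basisFreeMonoid K (Fin 2)).disjoint_span_singleton (ne_of_apply_ne _ hne)
  have hX : iSupIndep X := iSupIndep_fin_three_of_disjoint (hV ▸ disjoint_iff.2 hdisj) hm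
  -- The k-th summand is `(⨆ i ∈ s k, X i) * (⨆ j ∈ t k, X j)` for the index sets below;
  -- the products `s k ×ˢ t k` partition `Fin 3 × Fin 3`.
  have hF : ![U * U, U * V, V * U, (K ∙ mono K f1) * V, (K ∙ mono K f2) * V] =
      fun k => (⨆ i ∈ (![{0}, {0}, {1, 2}, {1}, {2}] : Fin 5 → Finset (Fin 3)) k, X i) *
        ⨆ j ∈ (![{0}, {1, 2}, {0}, {1, 2}, {1, 2}] : Fin 5 → Finset (Fin 3)) k, X j := by
    funext k
    fin_cases k <;> simp [X, hV]
  rw [hF]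
  have hXle : ∀ i, X i ≤ span K (basisFreeMonoid K (Fin 2) '' {v | v.length = 2 ^ n}) :=
    fun i => by rw [← Adeg_eq_span, ← hXsup]; exact le_iSup X i
  refine ⟨?_, iSupIndep_biSup_mul_biSup hX hXle (by decide)⟩
  rw [iSup_biSup_mul_biSup (by decide), hXsup, Adeg_mul_Adeg, ← two_mul, ← pow_succ']
end
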